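/- The ratio of the HTHS marginal density to the HS marginal density of γ tends to infinity both as γ → 0⁺ and as γ → ∞: with f_HTHS(γ) = 1/(γ((log γ)² + π²)) and f_HS(γ) = γ^{−1/2}/(π(1+γ)), we have f_HTHS(γ)/f_HS(γ) → ∞ as γ → 0⁺ and as γ → ∞. -/

import Mathlib

/-!
Both laws of γ are invariant under γ ↦ γ⁻¹: each density satisfies f(γ⁻¹) = γ² f(γ), so the
ratio f_HTHS / f_HS is itself invariant and the limit at ∞ is the limit at 0⁺. Near 0 the ratio
is π(1 + γ) / (√γ ((log γ)² + π²)), whose denominator tends to 0⁺ because √γ (log γ)² → 0.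
-/

open Real MeasureTheory Filter

/-- The HTHS marginal density of γ. -/
noncomputable def fHTHS (γ : ℝ) : ℝ := 1 / (γ * ((Real.log γ)^2 + π^2))

/-- The Horseshoe marginal density of γ. -/
noncomputable def fHS (γ : ℝ) : ℝ := γ ^ (-(1:ℝ)/2) / (π * (1 + γ))

open Topology

theorem fHTHS_inv (x : ℝ) : fHTHS x⁻¹ = x ^ 2 * fHTHS x := by
  rcases eq_or_ne x 0 with rfl | hx
  · simp [fHTHS]
  simp only [fHTHS, Real.log_inv, neg_sq]
  field_simp

theorem fHS_eq_inv_sqrt {x : ℝ} (hx : 0 ≤ x) : fHS x = (√x)⁻¹ / (π * (1 + x)) := by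
  rw [fHS, Real.sqrt_eq_rpow, ← Real.rpow_neg hx]
  norm_num

theorem fHS_inv {x : ℝ} (hx : 0 < x) : fHS x⁻¹ = x ^ 2 * fHS x := by
  rw [fHS_eq_inv_sqrt hx.le, fHS_eq_inv_sqrt (inv_nonneg.2 hx.le), Real.sqrt_inv, inv_inv]
  field_simp
  linear_combination (1 + x) * Real.sq_sqrt hx.le

theorem fHTHS_div_fHS_inv {x : ℝ} (hx : 0 < x) :
    fHTHS x⁻¹ / fHS x⁻¹ = fHTHS x / fHS x := by
  rw [fHTHS_inv, fHS_inv hx, mul_div_mul_left _ _ (by positivity)]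

theorem fHTHS_div_fHS_eq_inv_sqrt {x : ℝ} (hx : 0 < x) :
    fHTHS x / fHS x = π * (1 + x) / (√x * (log x ^ 2 + π ^ 2)) := by
  rw [fHTHS, fHS_eq_inv_sqrt hx.le]
  nth_rw 1 [← Real.sq_sqrt hx.le]
  field_simp

theorem tendsto_sqrt_mul_log_sq_add_nhdsGT_zero (c : ℝ) :
    Tendsto (fun x => √x * (log x ^ 2 + c)) (𝓝[>] 0) (𝓝 0) := by
  have hlog : Tendsto (fun x => (log x * x ^ (1 / 4 : ℝ)) ^ 2) (𝓝[>] 0) (𝓝 0) := by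
    simpa using (tendsto_log_mul_rpow_nhdsGT_zero (r := 1 / 4) (by norm_num)).pow 2
  have hsqrt : Tendsto (fun x : ℝ => √x) (𝓝[>] 0) (𝓝 0) := by
    simpa using Real.continuous_sqrt.tendsto 0 |>.mono_left nhdsWithin_le_nhds
  have := hlog.add (hsqrt.mul_const c)
  rw [zero_mul, add_zero] at this
  refine this.congr' ?_
  filter_upwards [self_mem_nhdsWithin] with x (hx : 0 < x)
  have hquarter : (x ^ (1 / 4 : ℝ)) ^ 2 = √x := by
    rw [← Real.rpow_natCast, ← Real.rpow_mul hx.le, Real.sqrt_eq_rpow]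
    norm_num
  rw [mul_pow, hquarter]
  ring

theorem tendsto_fHTHS_div_fHS_nhdsGT_zero :
    Tendsto (fun x => fHTHS x / fHS x) (𝓝[>] 0) atTop := by
  have hden : Tendsto (fun x => √x * (log x ^ 2 + π ^ 2)) (𝓝[>] 0) (𝓝[>] 0) := by
    refine tendsto_nhdsWithin_iff.2 ⟨tendsto_sqrt_mul_log_sq_add_nhdsGT_zero _, ?_⟩
    filter_upwards [self_mem_nhdsWithin] with x (hx : 0 < x)
    exact mul_pos (Real.sqrt_pos.2 hx) (by positivity)
  have hnum : Tendsto (fun x => π * (1 + x)) (𝓝[>] 0) (𝓝 π) := by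
    simpa using ((continuous_const (y := (1 : ℝ)) |>.add continuous_id).const_mul π).tendsto 0
      |>.mono_left nhdsWithin_le_nhds
  refine (hnum.pos_mul_atTop pi_pos hden.inv_tendsto_nhdsGT_zero).congr' ?_
  filter_upwards [self_mem_nhdsWithin] with x (hx : 0 < x)
  rw [Pi.inv_apply, fHTHS_div_fHS_eq_inv_sqrt hx, div_eq_mul_inv]

theorem tendsto_fHTHS_div_fHS_atTop : Tendsto (fun x => fHTHS x / fHS x) atTop atTop := by
  refine (tendsto_fHTHS_div_fHS_nhdsGT_zero.comp tendsto_inv_atTop_nhdsGT_zero).congr' ?_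
  filter_upwards [eventually_gt_atTop 0] with x hx using fHTHS_div_fHS_inv hx

/-- The ratio of HTHS to HS marginal densities of γ tends to ∞ at the origin
and in the tail. -/
theorem hths_hs_ratio_diverges :
    Filter.Tendsto (fun γ => fHTHS γ / fHS γ) (nhdsWithin 0 (Set.Ioi (0:ℝ))) Filter.atTop ∧
    Filter.Tendsto (fun γ => fHTHS γ / fHS γ) Filter.atTop Filter.atTop :=
  ⟨tendsto_fHTHS_div_fHS_nhdsGT_zero, tendsto_fHTHS_div_fHS_atTop⟩
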